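/- arXiv:1505.00197 — 6 statements merged into one kernel-verified Lean document; each statement's English description precedes it below -/
import Mathlib

section
/- Let K be a field complete with respect to a non-archimedean absolute value |·|, and let L₁,...,Lₙ ∈ K[X₁,...,Xₙ] be n linearly independent linear forms. Let ‖·‖ denote the sup norm on Kⁿ. Suppose x ∈ Kⁿ and j is an index such that |L_j(x)|/‖L_j‖ ≥ |L_i(x)|/‖L_i‖ for all i = 1,...,n. Then |L_j(x)|/‖L_j‖ ≥ ‖x‖·|det(L₁,...,Lₙ)| / ∏ᵢ‖L_i‖, where det(L₁,...,Lₙ) denotes the determinant of the matrix whose rows are the coefficient vectors of the L_i. -/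
/-!
Write `y = M x` for the matrix `M` with rows `L i`. Cramer's rule gives `det M • x = adj M y`,
and in an ultrametric field every entry `adj M k i` (a signed minor omitting row `i`) is bounded by
`∏_{l ≠ i} ‖L l‖`. Hence `‖det M‖ ‖x‖ ≤ maxᵢ ‖y i‖ ∏_{l ≠ i} ‖L l‖`, and the maximality of `j` bounds
each `‖y i‖` by `‖L i‖ · ‖y j‖ / ‖L j‖`.
-/

open Finset

namespace Matrix

variable {K : Type*} [NormedField K] [IsUltrametricDist K] {n : Type*} [Fintype n] [DecidableEq n]

theorem norm_det_le_prod_norm_row (M : Matrix n n K) : ‖M.det‖ ≤ ∏ i, ‖M i‖ := by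
  rw [det_apply]
  refine IsUltrametricDist.norm_sum_le_of_forall_le_of_nonneg
    (prod_nonneg fun i _ => norm_nonneg _) fun σ _ => ?_
  calc ‖Equiv.Perm.sign σ • ∏ i, M (σ i) i‖ = ∏ i, ‖M (σ i) i‖ := by
        rcases Int.units_eq_one_or (Equiv.Perm.sign σ) with h | h <;> simp [h]
    _ ≤ ∏ i, ‖M (σ i)‖ :=
        prod_le_prod (fun i _ => norm_nonneg _) fun i _ => norm_le_pi_norm (M (σ i)) i
    _ = ∏ i, ‖M i‖ := Equiv.prod_comp σ fun i => ‖M i‖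

theorem norm_adjugate_apply_le_prod_erase (M : Matrix n n K) (k i : n) :
    ‖M.adjugate k i‖ ≤ ∏ l ∈ univ.erase i, ‖M l‖ := by
  rw [adjugate_apply]
  refine (norm_det_le_prod_norm_row _).trans ?_
  rw [← mul_prod_erase univ _ (mem_univ i), updateRow_self, Pi.norm_single, norm_one, one_mul]
  exact (prod_congr rfl fun l hl => by rw [updateRow_ne (ne_of_mem_erase hl)]).le

theorem norm_det_mul_norm_le_of_norm_mulVec_le (M : Matrix n n K) (x : n → K) {c : ℝ}
    (hc : 0 ≤ c) (h : ∀ i, ‖(M *ᵥ x) i‖ ≤ c * ‖M i‖) :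
    ‖M.det‖ * ‖x‖ ≤ c * ∏ i, ‖M i‖ := by
  have hcramer : M.det • x = M.adjugate *ᵥ (M *ᵥ x) := by
    rw [mulVec_mulVec, adjugate_mul, smul_mulVec, one_mulVec]
  have hbound : 0 ≤ c * ∏ i, ‖M i‖ := mul_nonneg hc (prod_nonneg fun i _ => norm_nonneg _)
  rw [← norm_smul, hcramer]
  refine (pi_norm_le_iff_of_nonneg hbound).mpr fun k => ?_
  refine IsUltrametricDist.norm_sum_le_of_forall_le_of_nonneg hbound fun i _ => ?_
  calc ‖M.adjugate k i * (M *ᵥ x) i‖ ≤ (∏ l ∈ univ.erase i, ‖M l‖) * (c * ‖M i‖) := by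
        rw [norm_mul]
        exact mul_le_mul (norm_adjugate_apply_le_prod_erase M k i) (h i) (norm_nonneg _)
          (prod_nonneg fun _ _ => norm_nonneg _)
    _ = c * ∏ l, ‖M l‖ := by rw [← mul_prod_erase univ _ (mem_univ i)]; ring

end Matrix

theorem stmt_0_general {K : Type*} [NontriviallyNormedField K]
    [IsUltrametricDist K] (n : ℕ) (L : Fin n → Fin n → K)
    (x : Fin n → K) (j : Fin n)
    (hj : ∀ i, ‖∑ k, L i k * x k‖ / ‖L i‖ ≤ ‖∑ k, L j k * x k‖ / ‖L j‖) :
    ‖x‖ * ‖(Matrix.of L).det‖ / ∏ i, ‖L i‖ ≤ ‖∑ k, L j k * x k‖ / ‖L j‖ := by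
  have hR : 0 ≤ ‖∑ k, L j k * x k‖ / ‖L j‖ := by positivity
  have hform : ∀ i, ‖∑ k, L i k * x k‖ ≤ ‖∑ k, L j k * x k‖ / ‖L j‖ * ‖L i‖ := by
    intro i
    rcases eq_or_ne (L i) 0 with hi | hi
    · simp [hi]
    · exact (div_le_iff₀ (norm_pos_iff.mpr hi)).mp (hj i)
  refine div_le_of_le_mul₀ (prod_nonneg fun i _ => norm_nonneg _) hR ?_
  rw [mul_comm]
  exact (Matrix.of L).norm_det_mul_norm_le_of_norm_mulVec_le x hR hform

/-- Non-archimedean version of a lemma on linear forms: if `|L j (x)|/‖L j‖` is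
maximal among the `|L i (x)|/‖L i‖`, then it is at least
`‖x‖·|det(L₁,…,Lₙ)| / ∏ᵢ ‖L i‖`. -/
theorem stmt_0 {K : Type*} [NontriviallyNormedField K] [CompleteSpace K]
    [IsUltrametricDist K] (n : ℕ) (L : Fin n → Fin n → K)
    (hL : LinearIndependent K L) (x : Fin n → K) (j : Fin n)
    (hj : ∀ i, ‖∑ k, L i k * x k‖ / ‖L i‖ ≤ ‖∑ k, L j k * x k‖ / ‖L j‖) :
    ‖x‖ * ‖(Matrix.of L).det‖ / ∏ i, ‖L i‖ ≤ ‖∑ k, L j k * x k‖ / ‖L j‖ :=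
  stmt_0_general n L x j hj
end

section
/- Let F(X,Y) ∈ ℤ[X,Y] be homogeneous of degree d ≥ 2 with non-zero discriminant and content 1, factoring as F = ∏ᵢ Mᵢ over an algebraic closure of ℚ_p. If (x,y) ∈ ℤ² is primitive and i₀ is an index minimizing |Mᵢ(x,y)|_p/‖Mᵢ‖_p, and M_{i₀} is not defined over ℚ_p (i.e., some Galois conjugate of M_{i₀} equals a different factor M_{i₁} up to scalar), then |F(x,y)|_p ≥ |D(F)|_p. -/
/-!
For a primitive point `z = (x, y)` we have `‖z‖ = 1`, so Cramer's rule bounds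
`|det(Mᵢ, Mⱼ)|` by `‖Mᵢ‖ ‖Mⱼ‖ max(tᵢ, tⱼ)`, where `tᵢ = |Mᵢ(z)| / ‖Mᵢ‖ ≤ 1`, and Gauss's lemma
gives `∏ ‖Mᵢ‖ ≤ 1`. The conjugation carrying `M_{i₀}` to a multiple of `M_{i₁}` preserves norms,
so `t_{i₁} = t_{i₀}`: the minimum of `t` is attained twice, and every `i` has a partner `j ≠ i`
with `max(tᵢ, tⱼ) = tᵢ`. Bounding all other factors by `1`,
`|D| = ∏_{i ≠ j} |det(Mᵢ, Mⱼ)| ≤ ∏ ‖Mᵢ‖ ∏ tᵢ = ∏ |Mᵢ(z)| = |F(x, y)|`.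
-/

open MvPolynomial Finset

section Ultrametric

variable {K : Type*} [NormedField K] [IsUltrametricDist K]

lemma norm_intCast_prod_eq_one_of_isCoprime {x y : ℤ} (h : IsCoprime x y) :
    ‖((x : K), (y : K))‖ = 1 := by
  obtain ⟨u, w, huw⟩ := h
  refine le_antisymm (max_le (IsUltrametricDist.norm_intCast_le_one K x)
    (IsUltrametricDist.norm_intCast_le_one K y)) ?_
  have hbezout : (u : K) * x + (w : K) * y = 1 := by
    simpa using congrArg (Int.cast : ℤ → K) huw
  calc (1 : ℝ) = ‖(u : K) * x + (w : K) * y‖ := by rw [hbezout, norm_one]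
    _ ≤ max (‖(u : K)‖ * ‖(x : K)‖) (‖(w : K)‖ * ‖(y : K)‖) := by
      simpa only [norm_mul] using IsUltrametricDist.norm_add_le_max ((u : K) * x) ((w : K) * y)
    _ ≤ ‖((x : K), (y : K))‖ := max_le_max
      (mul_le_of_le_one_left (norm_nonneg _) (IsUltrametricDist.norm_intCast_le_one K u))
      (mul_le_of_le_one_left (norm_nonneg _) (IsUltrametricDist.norm_intCast_le_one K w))

lemma norm_fst_mul_add_snd_mul_le (m z : K × K) :
    ‖m.1 * z.1 + m.2 * z.2‖ ≤ ‖m‖ * ‖z‖ := by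
  refine (IsUltrametricDist.norm_add_le_max _ _).trans (max_le ?_ ?_) <;> rw [norm_mul]
  · exact mul_le_mul (norm_fst_le m) (norm_fst_le z) (norm_nonneg _) (norm_nonneg _)
  · exact mul_le_mul (norm_snd_le m) (norm_snd_le z) (norm_nonneg _) (norm_nonneg _)

/-- Cramer's rule: `det(m, n) • z = (n.2 * m(z) - m.2 * n(z), m.1 * n(z) - n.1 * m(z))`. -/
lemma norm_det_mul_norm_le (m n z : K × K) :
    ‖m.1 * n.2 - n.1 * m.2‖ * ‖z‖ ≤
      max (‖n‖ * ‖m.1 * z.1 + m.2 * z.2‖) (‖m‖ * ‖n.1 * z.1 + n.2 * z.2‖) := by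
  set μ := m.1 * z.1 + m.2 * z.2
  set ν := n.1 * z.1 + n.2 * z.2
  have hcomb : ∀ u w : K, ‖u‖ ≤ ‖n‖ → ‖w‖ ≤ ‖m‖ →
      ‖u * μ + w * ν‖ ≤ max (‖n‖ * ‖μ‖) (‖m‖ * ‖ν‖) := fun u w hu hw =>
    (IsUltrametricDist.norm_add_le_max _ _).trans (max_le_max
      (by rw [norm_mul]; exact mul_le_mul_of_nonneg_right hu (norm_nonneg _))
      (by rw [norm_mul]; exact mul_le_mul_of_nonneg_right hw (norm_nonneg _)))
  rw [Prod.norm_def z, mul_max_of_nonneg _ _ (norm_nonneg _), ← norm_mul, ← norm_mul]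
  refine max_le ?_ ?_
  · have h := hcomb n.2 (-m.2) (norm_snd_le n) (by simpa using norm_snd_le m)
    rwa [show n.2 * μ + -m.2 * ν = (m.1 * n.2 - n.1 * m.2) * z.1 by ring] at h
  · have h := hcomb (-n.1) m.1 (by simpa using norm_fst_le n) (norm_fst_le m)
    rwa [show -n.1 * μ + m.1 * ν = (m.1 * n.2 - n.1 * m.2) * z.2 by ring] at h

end Ultrametric

section Gauss

variable {K : Type*} [NormedField K] [IsUltrametricDist K]

local notation "gaussNorm₁" => Polynomial.gaussNorm (NormedField.toAbsoluteValue K) 1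

lemma gaussNorm_C_mul_X_add_C (a b : K) :
    gaussNorm₁ (Polynomial.C a * Polynomial.X + Polynomial.C b) = ‖(a, b)‖ := by
  have hcoeff (n : ℕ) : ‖(Polynomial.C a * Polynomial.X + Polynomial.C b).coeff n‖ ≤
      gaussNorm₁ (Polynomial.C a * Polynomial.X + Polynomial.C b) := by
    have h := Polynomial.le_gaussNorm (NormedField.toAbsoluteValue K)
      (Polynomial.C a * Polynomial.X + Polynomial.C b) zero_le_one n
    rwa [one_pow, mul_one] at h
  refine le_antisymm ?_ (max_le (by simpa using hcoeff 1) (by simpa using hcoeff 0))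
  refine (Polynomial.isNonarchimedean_gaussNorm _ IsUltrametricDist.isNonarchimedean_norm
    zero_le_one _ _).trans (max_le_max ?_ ?_)
  · rw [Polynomial.C_mul_X_eq_monomial, Polynomial.gaussNorm_monomial, one_pow, mul_one]
    rfl
  · rw [Polynomial.gaussNorm_C]
    rfl

lemma gaussNorm_prod {ι : Type*} (s : Finset ι) (P : ι → Polynomial K) :
    gaussNorm₁ (∏ i ∈ s, P i) = ∏ i ∈ s, gaussNorm₁ (P i) := by
  classical
  induction s using Finset.induction_on with
  | empty => simpa using Polynomial.gaussNorm_C (NormedField.toAbsoluteValue K) 1 (1 : K)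
  | insert i s hi ih =>
    rw [prod_insert hi, prod_insert hi, Polynomial.gaussNorm_mul
      IsUltrametricDist.isNonarchimedean_norm zero_lt_one, ih]

lemma gaussNorm_map_intCast_le_one (P : Polynomial ℤ) :
    gaussNorm₁ (P.map (Int.castRingHom K)) ≤ 1 := by
  obtain ⟨n, hn⟩ := Polynomial.exists_eq_gaussNorm (NormedField.toAbsoluteValue K) 1
    (P.map (Int.castRingHom K))
  rw [hn, one_pow, mul_one, Polynomial.coeff_map]
  exact IsUltrametricDist.norm_intCast_le_one K _

lemma prod_norm_le_one_of_aeval_eq_prod [Infinite K] {ι : Type*} (s : Finset ι)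
    (P : Polynomial ℤ) (m : ι → K × K)
    (h : ∀ r : K, Polynomial.aeval r P = ∏ i ∈ s, ((m i).1 * r + (m i).2)) :
    ∏ i ∈ s, ‖m i‖ ≤ 1 := by
  have hfac : P.map (Int.castRingHom K) =
      ∏ i ∈ s, (Polynomial.C (m i).1 * Polynomial.X + Polynomial.C (m i).2) :=
    Polynomial.funext fun r => by simp [Polynomial.eval_prod, ← h r, Polynomial.aeval_def,
      Polynomial.eval_map]
  simpa only [hfac, gaussNorm_prod, gaussNorm_C_mul_X_add_C] using
    gaussNorm_map_intCast_le_one (K := K) P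

end Gauss

lemma aeval_aeval_X_one {R A : Type*} [CommRing R] [CommRing A] [Algebra R A]
    (F : MvPolynomial (Fin 2) R) (r : A) :
    Polynomial.aeval r (aeval ![Polynomial.X, 1] F : Polynomial R) = aeval ![r, 1] F := by
  rw [comp_aeval_apply]
  congr 2
  funext i
  fin_cases i <;> simp

lemma norm_eval_div_norm_eq_of_map_eq_smul {K : Type*} [NormedField K] (σ : K →+* K)
    (hσ : ∀ z : K, ‖σ z‖ = ‖z‖) {m n : K × K} {c : K} (hc : c ≠ 0)
    (hconj : σ m.1 = c * n.1 ∧ σ m.2 = c * n.2) (x y : ℤ) :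
    ‖m.1 * x + m.2 * y‖ / ‖m‖ = ‖n.1 * x + n.2 * y‖ / ‖n‖ := by
  have heval : ‖m.1 * x + m.2 * y‖ = ‖c‖ * ‖n.1 * x + n.2 * y‖ := by
    rw [← hσ, map_add, map_mul, map_mul, map_intCast, map_intCast, hconj.1, hconj.2, ← norm_mul]
    ring_nf
  have hnorm : ‖m‖ = ‖c‖ * ‖n‖ := by
    rw [Prod.norm_def, Prod.norm_def, ← hσ m.1, ← hσ m.2, hconj.1, hconj.2, norm_mul, norm_mul,
      mul_max_of_nonneg _ _ (norm_nonneg c)]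
  rw [heval, hnorm, mul_div_mul_left _ _ (norm_ne_zero_iff.mpr hc)]

section OffDiagonal

variable {ι : Type*} [Fintype ι] [DecidableEq ι]

lemma prod_prod_compl_mul {M : Type*} [CommMonoid M] (f : ι → M) :
    ∏ i, ∏ j ∈ {i}ᶜ, f i * f j = (∏ i, f i) ^ (2 * (Fintype.card ι - 1)) := by
  have hswap : ∏ i, ∏ j ∈ {i}ᶜ, f j = ∏ i, ∏ j ∈ ({i}ᶜ : Finset ι), f i :=
    prod_comm' fun i j => by simp [eq_comm]
  simp_rw [prod_mul_distrib, hswap, prod_const, card_compl, card_singleton, prod_pow, ← pow_add,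
    two_mul]

lemma prod_prod_compl_max_le_prod {t : ι → ℝ} (h0 : ∀ i, 0 ≤ t i) (h1 : ∀ i, t i ≤ 1)
    (hmin : ∀ i, ∃ j ≠ i, t j ≤ t i) :
    ∏ i, ∏ j ∈ {i}ᶜ, max (t i) (t j) ≤ ∏ i, t i := by
  have hmax0 (i j : ι) : 0 ≤ max (t i) (t j) := (h0 i).trans (le_max_left _ _)
  refine prod_le_prod (fun i _ => prod_nonneg fun j _ => hmax0 i j) fun i _ => ?_
  obtain ⟨j, hji, hj⟩ := hmin i
  calc ∏ k ∈ {i}ᶜ, max (t i) (t k)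
      = max (t i) (t j) * ∏ k ∈ ({i}ᶜ : Finset ι).erase j, max (t i) (t k) :=
        (mul_prod_erase _ _ (by simpa using hji)).symm
    _ ≤ max (t i) (t j) * 1 := mul_le_mul_of_nonneg_left
        (prod_le_one (fun k _ => hmax0 i k) fun k _ => max_le (h1 i) (h1 k)) (hmax0 i j)
    _ = t i := by rw [mul_one, max_eq_left hj]

theorem prod_prod_compl_le_prod [Nontrivial ι] {lam v : ι → ℝ} {δ : ι → ι → ℝ}
    (hlam : ∀ i, 0 < lam i) (hv0 : ∀ i, 0 ≤ v i) (hvlam : ∀ i, v i ≤ lam i)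
    (hprod : ∏ i, lam i ≤ 1) (hδ0 : ∀ i j, 0 ≤ δ i j)
    (hδ : ∀ i j, δ i j ≤ max (lam j * v i) (lam i * v j))
    (hmin : ∀ i, ∃ j ≠ i, v j / lam j ≤ v i / lam i) :
    ∏ i, ∏ j ∈ {i}ᶜ, δ i j ≤ ∏ i, v i := by
  set t : ι → ℝ := fun i => v i / lam i
  have hvt (i : ι) : v i = lam i * t i := (mul_div_cancel₀ _ (hlam i).ne').symm
  have hδt (i j : ι) : δ i j ≤ lam i * lam j * max (t i) (t j) := by
    refine (hδ i j).trans_eq ?_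
    rw [mul_max_of_nonneg _ _ (mul_pos (hlam i) (hlam j)).le, hvt i, hvt j]
    ring_nf
  have hcard : 2 * (Fintype.card ι - 1) ≠ 0 := by
    have := Fintype.one_lt_card (α := ι)
    omega
  calc ∏ i, ∏ j ∈ {i}ᶜ, δ i j
      ≤ ∏ i, ∏ j ∈ {i}ᶜ, (lam i * lam j * max (t i) (t j)) :=
        prod_le_prod (fun i _ => prod_nonneg fun j _ => hδ0 i j)
          fun i _ => prod_le_prod (fun j _ => hδ0 i j) fun j _ => hδt i j
    _ = (∏ i, lam i) ^ (2 * (Fintype.card ι - 1)) * ∏ i, ∏ j ∈ {i}ᶜ, max (t i) (t j) := by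
        rw [← prod_prod_compl_mul, ← prod_mul_distrib]
        exact prod_congr rfl fun i _ => prod_mul_distrib
    _ ≤ (∏ i, lam i) * ∏ i, t i := by
        have hlam0 : 0 ≤ ∏ i, lam i := prod_nonneg fun i _ => (hlam i).le
        refine mul_le_mul (pow_le_of_le_one hlam0 hprod hcard)
          (prod_prod_compl_max_le_prod (fun i => div_nonneg (hv0 i) (hlam i).le)
            (fun i => div_le_one_of_le₀ (hvlam i) (hlam i).le) hmin)
          (prod_nonneg fun i _ => prod_nonneg fun j _ => ?_) hlam0
        exact (div_nonneg (hv0 i) (hlam i).le).trans (le_max_left _ _)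
    _ = ∏ i, v i := by rw [← prod_mul_distrib]; exact prod_congr rfl fun i _ => (hvt i).symm

end OffDiagonal

section Discriminant

variable {K : Type*} [NormedField K]

lemma norm_prod_prod_Ioi_det_sq {ι : Type*} [Fintype ι] [LinearOrder ι]
    [LocallyFiniteOrderTop ι] [LocallyFiniteOrderBot ι] (M : ι → K × K) :
    ‖∏ i, ∏ j ∈ Ioi i, ((M i).1 * (M j).2 - (M j).1 * (M i).2) ^ 2‖ =
      ∏ i, ∏ j ∈ {i}ᶜ, ‖(M i).1 * (M j).2 - (M j).1 * (M i).2‖ := by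
  rw [← prod_prod_Ioi_mul_eq_prod_prod_off_diag
    (fun i j => ‖(M j).1 * (M i).2 - (M i).1 * (M j).2‖), norm_prod]
  refine prod_congr rfl fun i _ => ?_
  rw [norm_prod]
  refine prod_congr rfl fun j _ => ?_
  rw [norm_pow, sq, ← norm_neg ((M j).1 * (M i).2 - (M i).1 * (M j).2), neg_sub]

lemma norm_pos_of_prod_prod_det_ne_zero {ι : Type*} [Fintype ι] [DecidableEq ι] [Nontrivial ι]
    (M : ι → K × K) (h : ∏ i, ∏ j ∈ {i}ᶜ, ‖(M i).1 * (M j).2 - (M j).1 * (M i).2‖ ≠ 0)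
    (i : ι) : 0 < ‖M i‖ := by
  obtain ⟨j, hj⟩ := exists_ne i
  have hdet := prod_ne_zero_iff.mp (prod_ne_zero_iff.mp h i (mem_univ i)) j (by simpa using hj)
  exact norm_pos_iff.mpr fun hMi => hdet (by simp [hMi])

end Discriminant

lemma intCast_eval_eq_aeval {A : Type*} [CommRing A] (F : MvPolynomial (Fin 2) ℤ) (x y : ℤ) :
    ((eval ![x, y] F : ℤ) : A) = aeval ![(x : A), (y : A)] F := by
  rw [show ![(x : A), (y : A)] = algebraMap ℤ A ∘ ![x, y] by ext i; fin_cases i <;> simp,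
    MvPolynomial.aeval_algebraMap_apply]
  simp

theorem stmt_6_general (p : ℕ) [Fact p.Prime] (d : ℕ)
    (F : MvPolynomial (Fin 2) ℤ)
    (K : Type*) [NormedField K] [IsUltrametricDist K] [Algebra ℚ_[p] K]
    (hext : ∀ q : ℚ_[p], ‖algebraMap ℚ_[p] K q‖ = ‖q‖)
    (M : Fin d → K × K)
    (hfac : ∀ u v : K, (aeval ![u, v]) F = ∏ i, ((M i).1 * u + (M i).2 * v))
    (D : ℤ) (hD0 : D ≠ 0)
    (hD : (D : K) = ∏ i, ∏ j ∈ Finset.Ioi i,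
      ((M i).1 * (M j).2 - (M j).1 * (M i).2) ^ 2)
    (x y : ℤ) (hxy : Int.gcd x y = 1)
    (i₀ : Fin d)
    (hmin : ∀ i, ‖(M i₀).1 * (x : K) + (M i₀).2 * (y : K)‖ / max ‖(M i₀).1‖ ‖(M i₀).2‖ ≤
      ‖(M i).1 * (x : K) + (M i).2 * (y : K)‖ / max ‖(M i).1‖ ‖(M i).2‖)
    (σ : K ≃ₐ[ℚ_[p]] K) (hσ : ∀ z : K, ‖σ z‖ = ‖z‖)
    (i₁ : Fin d) (hi₁ : i₁ ≠ i₀)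
    (c : K) (hc : c ≠ 0)
    (hconj : σ (M i₀).1 = c * (M i₁).1 ∧ σ (M i₀).2 = c * (M i₁).2) :
    ‖(D : ℚ_[p])‖ ≤ ‖(((eval ![x, y]) F : ℤ) : ℚ_[p])‖ := by
  have hnorm_intCast (n : ℤ) : ‖(n : K)‖ = ‖(n : ℚ_[p])‖ := by simpa using hext n
  have : CharZero K := charZero_of_injective_algebraMap (algebraMap ℚ_[p] K).injective
  have : Nontrivial (Fin d) := ⟨⟨i₁, i₀, hi₁⟩⟩
  have hz : ‖((x : K), (y : K))‖ = 1 :=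
    norm_intCast_prod_eq_one_of_isCoprime (Int.isCoprime_iff_gcd_eq_one.mpr hxy)
  have hdisc : ‖(D : K)‖ = ∏ i, ∏ j ∈ {i}ᶜ, ‖(M i).1 * (M j).2 - (M j).1 * (M i).2‖ := by
    rw [hD, norm_prod_prod_Ioi_det_sq]
  have hlam := norm_pos_of_prod_prod_det_ne_zero M (hdisc ▸ by simpa [hnorm_intCast] using hD0)
  have hprod : ∏ i, ‖M i‖ ≤ 1 :=
    prod_norm_le_one_of_aeval_eq_prod univ (aeval ![Polynomial.X, 1] F) M fun r => by
      simp [aeval_aeval_X_one, hfac]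
  have hmin' (i : Fin d) : ∃ j ≠ i, ‖(M j).1 * (x : K) + (M j).2 * (y : K)‖ / ‖M j‖ ≤
      ‖(M i).1 * (x : K) + (M i).2 * (y : K)‖ / ‖M i‖ := by
    by_cases hi : i = i₀
    · subst hi
      exact ⟨i₁, hi₁, (norm_eval_div_norm_eq_of_map_eq_smul σ.toRingHom hσ hc hconj x y).ge⟩
    · exact ⟨i₀, Ne.symm hi, hmin i⟩
  rw [← hnorm_intCast, ← hnorm_intCast, hdisc, intCast_eval_eq_aeval, hfac, norm_prod]
  refine prod_prod_compl_le_prod hlam (fun i => norm_nonneg _) (fun i => ?_) hprod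
    (fun i j => norm_nonneg _) (fun i j => ?_) hmin'
  · simpa [hz] using norm_fst_mul_add_snd_mul_le (M i) ((x : K), (y : K))
  · simpa [hz] using norm_det_mul_norm_le (M i) (M j) ((x : K), (y : K))

/-- If `F ∈ ℤ[X,Y]` is homogeneous of degree `d ≥ 2` with content 1 and non-zero
discriminant `D`, factoring as `F = ∏ᵢ Mᵢ` into linear forms over a non-archimedean
normed extension `K` of `ℚ_p` (with norm extending the `p`-adic absolute value),
`(x,y)` is a primitive integer point, `i₀` minimizes `|Mᵢ(x,y)|/‖Mᵢ‖`, and `M_{i₀}` is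
not defined over `ℚ_p` — witnessed by a norm-preserving `ℚ_p`-automorphism `σ` of `K`
carrying `M_{i₀}` to a scalar multiple of a different factor `M_{i₁}` — then
`|F(x,y)|_p ≥ |D|_p`. -/
theorem stmt_6 (p : ℕ) [Fact p.Prime] (d : ℕ) (hd : 2 ≤ d)
    (F : MvPolynomial (Fin 2) ℤ) (hhom : F.IsHomogeneous d)
    (hcont : Finset.gcd F.support F.coeff = 1)
    (K : Type*) [NormedField K] [IsUltrametricDist K] [Algebra ℚ_[p] K]
    (hext : ∀ q : ℚ_[p], ‖algebraMap ℚ_[p] K q‖ = ‖q‖)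
    (M : Fin d → K × K)
    (hfac : ∀ u v : K, (aeval ![u, v]) F = ∏ i, ((M i).1 * u + (M i).2 * v))
    (D : ℤ) (hD0 : D ≠ 0)
    (hD : (D : K) = ∏ i, ∏ j ∈ Finset.Ioi i,
      ((M i).1 * (M j).2 - (M j).1 * (M i).2) ^ 2)
    (x y : ℤ) (hxy : Int.gcd x y = 1)
    (i₀ : Fin d)
    (hmin : ∀ i, ‖(M i₀).1 * (x : K) + (M i₀).2 * (y : K)‖ / max ‖(M i₀).1‖ ‖(M i₀).2‖ ≤
      ‖(M i).1 * (x : K) + (M i).2 * (y : K)‖ / max ‖(M i).1‖ ‖(M i).2‖)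
    (σ : K ≃ₐ[ℚ_[p]] K) (hσ : ∀ z : K, ‖σ z‖ = ‖z‖)
    (i₁ : Fin d) (hi₁ : i₁ ≠ i₀)
    (c : K) (hc : c ≠ 0)
    (hconj : σ (M i₀).1 = c * (M i₁).1 ∧ σ (M i₀).2 = c * (M i₁).2) :
    ‖(D : ℚ_[p])‖ ≤ ‖(((eval ![x, y]) F : ℤ) : ℚ_[p])‖ :=
  stmt_6_general p d F K hext M hfac D hD0 hD x y hxy i₀ hmin σ hσ i₁ hi₁ c hc hconj
end

section
/- For any binary form F of degree d ≥ 2 with non-zero discriminant, the minimal height 𝔪(F) = inf_{|det T| = 1} ℋ(F∘T) satisfies 𝔪(F) ≥ |D(F)|^{1/(2(d-1))}. -/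
open MvPolynomial Finset

/-- `D` is the discriminant of the binary form `F` of degree `d`. -/
def IsBinaryDiscriminantR (d : ℕ) (F : MvPolynomial (Fin 2) ℝ) (D : ℝ) : Prop :=
  ∃ L : Fin d → ℂ × ℂ,
    (∀ x y : ℂ, (aeval ![x, y]) F = ∏ i, ((L i).1 * x + (L i).2 * y)) ∧
    (D : ℂ) = ∏ i, ∏ j ∈ Finset.Ioi i,
      ((L i).1 * (L j).2 - (L j).1 * (L i).2) ^ 2

/-- `H = ℋ(G)` for the binary form `G` of degree `d`. -/
def IsBinaryHeight (d : ℕ) (G : MvPolynomial (Fin 2) ℝ) (H : ℝ) : Prop :=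
  ∃ L : Fin d → ℂ × ℂ,
    (∀ x y : ℂ, (aeval ![x, y]) G = ∏ i, ((L i).1 * x + (L i).2 * y)) ∧
    H = ∏ i, Real.sqrt (‖(L i).1‖ ^ 2 + ‖(L i).2‖ ^ 2)

/-- The substitution `F ∘ T` of a matrix `T` into a binary form. -/
noncomputable def formComp (F : MvPolynomial (Fin 2) ℝ) (T : Matrix (Fin 2) (Fin 2) ℝ) :
    MvPolynomial (Fin 2) ℝ :=
  (bind₁ (fun i => C (T i 0) * X 0 + C (T i 1) * X 1)) F

/-- `𝔪(F)`: the infimum of `ℋ(F ∘ T)` over `T ∈ GL₂(ℝ)` with `|det T| = 1`. -/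
noncomputable def minHeight (d : ℕ) (F : MvPolynomial (Fin 2) ℝ) : ℝ :=
  sInf {H | ∃ T : Matrix (Fin 2) (Fin 2) ℝ, |T.det| = 1 ∧ IsBinaryHeight d (formComp F T) H}

/-!
Write `F = ∏ Lᵢ`. For `|det T| = 1` the forms `Lᵢ ∘ T` factor `F ∘ T`, and their pairwise
determinants `Lᵢ ∧ Lⱼ` only change by the factor `det T`, so they still give `|D|`. Any other
factorisation `M` of `F ∘ T` gives the same `|D|`: after a shear making no factor vanish at
`(1, 0)`, both factorisations dehomogenise to the same polynomial `a ∏ (X - ρᵢ)`. Then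
`∏_{i<j} |Lᵢ ∧ Lⱼ|² = |a|^{2(d-1)} ∏_{i<j} |ρᵢ - ρⱼ|²`, and the last product is `∏ |m'(r)|`
over the roots `r` of `m = ∏ (X - ρᵢ)`, so it depends on the polynomial only. Finally
Hadamard's inequality `|Mᵢ ∧ Mⱼ| ≤ ‖Mᵢ‖ ‖Mⱼ‖` gives
`|D| ≤ ∏ᵢ ‖Mᵢ‖^{2(d-1)} = ℋ(F ∘ T)^{2(d-1)}`.
-/

section PairProducts

variable {M : Type*} [CommMonoid M] {d : ℕ}

theorem Fin.prod_prod_erase_eq_prod_prod_Ioi (g : Fin d → Fin d → M) :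
    ∏ i, ∏ j ∈ univ.erase i, g i j = ∏ i, ∏ j ∈ Ioi i, g i j * g j i := by
  have hswap : ∏ i, ∏ j ∈ Iio i, g i j = ∏ i, ∏ j ∈ Ioi i, g j i :=
    prod_comm' (by simp)
  simp_rw [← compl_singleton, ← Ioi_disjUnion_Iio, prod_disjUnion, prod_mul_distrib, hswap]

theorem Fin.prod_prod_Ioi_mul (f : Fin d → M) :
    ∏ i, ∏ j ∈ Ioi i, f i * f j = ∏ i, f i ^ (d - 1) := by
  rw [← Fin.prod_prod_erase_eq_prod_prod_Ioi fun i _ => f i]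
  simp

end PairProducts

section Nodal

open Polynomial Lagrange

variable {K : Type*} [NormedField K] {d : ℕ}

theorem Lagrange.roots_nodal {R ι : Type*} [CommRing R] [IsDomain R] (s : Finset ι) (v : ι → R) :
    (nodal s v).roots = s.val.map v := by
  rw [nodal_eq, roots_prod _ _ nodal_ne_zero]
  simp

theorem prod_norm_eval_derivative_nodal (ρ : Fin d → K) :
    ∏ k, ‖(nodal univ ρ).derivative.eval (ρ k)‖ = ∏ i, ∏ j ∈ Ioi i, ‖ρ i - ρ j‖ ^ 2 := by
  simp_rw [eval_nodal_derivative_eval_node_eq (mem_univ _), eval_nodal, norm_prod,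
    Fin.prod_prod_erase_eq_prod_prod_Ioi fun i j => ‖ρ i - ρ j‖, norm_sub_rev (ρ _) (ρ _), sq]

theorem prod_norm_sub_sq_eq_of_nodal_eq {ρ ρ' : Fin d → K} (h : nodal univ ρ = nodal univ ρ') :
    ∏ i, ∏ j ∈ Ioi i, ‖ρ i - ρ j‖ ^ 2 = ∏ i, ∏ j ∈ Ioi i, ‖ρ' i - ρ' j‖ ^ 2 := by
  have key (σ : Fin d → K) : ∏ i, ∏ j ∈ Ioi i, ‖σ i - σ j‖ ^ 2
      = ((nodal univ σ).roots.map fun r => ‖(nodal univ σ).derivative.eval r‖).prod := by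
    rw [← prod_norm_eval_derivative_nodal, roots_nodal, Multiset.map_map]
    rfl
  rw [key, key, h]

end Nodal

section LinearForms

variable {K : Type*} {d : ℕ}

def linearFormsProd [CommRing K] (L : Fin d → K × K) (x y : K) : K :=
  ∏ i, ((L i).1 * x + (L i).2 * y)

def linearFormsDisc [CommRing K] (L : Fin d → K × K) : K :=
  ∏ i, ∏ j ∈ Ioi i, ((L i).1 * (L j).2 - (L j).1 * (L i).2) ^ 2

def linearFormsComp [CommRing K] (L : Fin d → K × K) (T : Matrix (Fin 2) (Fin 2) K) :
    Fin d → K × K :=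
  fun i => ((L i).1 * T 0 0 + (L i).2 * T 1 0, (L i).1 * T 0 1 + (L i).2 * T 1 1)

theorem linearFormsProd_comp [CommRing K] (L : Fin d → K × K) (T : Matrix (Fin 2) (Fin 2) K)
    (x y : K) : linearFormsProd (linearFormsComp L T) x y
      = linearFormsProd L (T 0 0 * x + T 0 1 * y) (T 1 0 * x + T 1 1 * y) :=
  prod_congr rfl fun _ _ => by simp only [linearFormsComp]; ring

theorem linearFormsDisc_comp [CommRing K] (L : Fin d → K × K) (T : Matrix (Fin 2) (Fin 2) K) :
    linearFormsDisc (linearFormsComp L T) = T.det ^ ((d - 1) * d) * linearFormsDisc L := by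
  have hwedge (i j : Fin d) : (linearFormsComp L T i).1 * (linearFormsComp L T j).2
      - (linearFormsComp L T j).1 * (linearFormsComp L T i).2
      = T.det * ((L i).1 * (L j).2 - (L j).1 * (L i).2) := by
    simp only [linearFormsComp, Matrix.det_fin_two]
    ring
  simp_rw [linearFormsDisc, hwedge, mul_pow, prod_mul_distrib, sq,
    Fin.prod_prod_Ioi_mul fun _ => T.det, prod_const, card_univ, Fintype.card_fin, pow_mul]

theorem linearFormsProd_eq_zero [CommRing K] {L : Fin d → K × K} {i : Fin d} (hi : L i = 0)
    (x y : K) : linearFormsProd L x y = 0 :=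
  prod_eq_zero (mem_univ i) (by simp [hi])

theorem linearFormsDisc_eq_zero [CommRing K] (hd : 2 ≤ d) {L : Fin d → K × K} {i : Fin d}
    (hi : L i = 0) : linearFormsDisc L = 0 := by
  have : Nontrivial (Fin d) := Fin.nontrivial_iff_two_le.2 hd
  obtain ⟨j, hj⟩ := exists_ne i
  rcases hj.lt_or_gt with hji | hij
  · exact prod_eq_zero (mem_univ j) (prod_eq_zero (mem_Ioi.2 hji) (by simp [hi]))
  · exact prod_eq_zero (mem_univ i) (prod_eq_zero (mem_Ioi.2 hij) (by simp [hi]))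

theorem exists_forall_fst_add_snd_mul_ne_zero [Field K] [Infinite K] {ι : Type*} [Fintype ι]
    (L : ι → K × K) (hL : ∀ i, L i ≠ 0) : ∃ s : K, ∀ i, (L i).1 + (L i).2 * s ≠ 0 := by
  classical
  obtain ⟨s, hs⟩ := Infinite.exists_notMem_finset (univ.image fun i => -(L i).1 / (L i).2)
  refine ⟨s, fun i hi => ?_⟩
  by_cases h2 : (L i).2 = 0
  · exact hL i (Prod.ext (by simpa [h2] using hi) h2)
  · exact hs (mem_image.2 ⟨i, mem_univ i, by field_simp; linear_combination -hi⟩)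

theorem exists_linearFormsProd_ne_zero [Field K] [Infinite K] {L : Fin d → K × K}
    (hL : ∀ i, L i ≠ 0) : ∃ x y, linearFormsProd L x y ≠ 0 := by
  obtain ⟨s, hs⟩ := exists_forall_fst_add_snd_mul_ne_zero L hL
  exact ⟨1, s, prod_ne_zero_iff.2 fun i _ => by simpa using hs i⟩

theorem norm_mul_sub_mul_sq_le [NormedField K] (u v w z : K) :
    ‖u * z - w * v‖ ^ 2 ≤ (‖u‖ ^ 2 + ‖v‖ ^ 2) * (‖w‖ ^ 2 + ‖z‖ ^ 2) := by
  have htri : ‖u * z - w * v‖ ≤ ‖u‖ * ‖z‖ + ‖w‖ * ‖v‖ := by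
    simpa only [norm_mul] using norm_sub_le (u * z) (w * v)
  nlinarith [pow_le_pow_left₀ (norm_nonneg _) htri 2, sq_nonneg (‖u‖ * ‖w‖ - ‖v‖ * ‖z‖),
    norm_nonneg u, norm_nonneg v, norm_nonneg w, norm_nonneg z]

theorem norm_linearFormsDisc [NormedField K] (L : Fin d → K × K) :
    ‖linearFormsDisc L‖ = ∏ i, ∏ j ∈ Ioi i, ‖(L i).1 * (L j).2 - (L j).1 * (L i).2‖ ^ 2 := by
  simp only [linearFormsDisc, norm_prod, norm_pow]

theorem norm_linearFormsDisc_le [NormedField K] (L : Fin d → K × K) :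
    ‖linearFormsDisc L‖ ≤ (∏ i, √(‖(L i).1‖ ^ 2 + ‖(L i).2‖ ^ 2)) ^ (2 * (d - 1)) := by
  rw [norm_linearFormsDisc, pow_mul, ← prod_pow, ← prod_pow, ← Fin.prod_prod_Ioi_mul]
  gcongr with i _ j _
  rw [Real.sq_sqrt (by positivity), Real.sq_sqrt (by positivity)]
  exact norm_mul_sub_mul_sq_le _ _ _ _

section Dehomogenization

open Polynomial Lagrange

def linearFormsRoots [Field K] (L : Fin d → K × K) : Fin d → K :=
  fun i => -(L i).2 / (L i).1

theorem eval_C_mul_nodal_linearFormsRoots [Field K] {L : Fin d → K × K} (hL : ∀ i, (L i).1 ≠ 0)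
    (t : K) : (Polynomial.C (∏ i, (L i).1) * nodal univ (linearFormsRoots L)).eval t
      = linearFormsProd L t 1 := by
  rw [Polynomial.eval_mul, Polynomial.eval_C, eval_nodal, ← prod_mul_distrib]
  refine prod_congr rfl fun i _ => ?_
  have := hL i
  simp only [linearFormsRoots]
  field_simp
  ring

theorem norm_linearFormsDisc_of_fst_ne_zero [NormedField K] {L : Fin d → K × K}
    (hL : ∀ i, (L i).1 ≠ 0) : ‖linearFormsDisc L‖ = ‖∏ i, (L i).1‖ ^ (2 * (d - 1))
      * ∏ i, ∏ j ∈ Ioi i, ‖linearFormsRoots L i - linearFormsRoots L j‖ ^ 2 := by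
  have hwedge (i j : Fin d) : (L i).1 * (L j).2 - (L j).1 * (L i).2
      = (L i).1 * (L j).1 * (linearFormsRoots L i - linearFormsRoots L j) := by
    have := hL i
    have := hL j
    simp only [linearFormsRoots]
    field_simp
    ring
  have hcoef : ‖∏ i, (L i).1‖ ^ (2 * (d - 1))
      = ∏ i, ∏ j ∈ Ioi i, ‖(L i).1‖ ^ 2 * ‖(L j).1‖ ^ 2 := by
    simp_rw [Fin.prod_prod_Ioi_mul fun i => ‖(L i).1‖ ^ 2, norm_prod, ← prod_pow, ← pow_mul]
  simp_rw [hcoef, ← prod_mul_distrib, norm_linearFormsDisc, hwedge, norm_mul, mul_pow]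

theorem norm_linearFormsDisc_eq_of_fst_ne_zero [NormedField K] [Infinite K]
    {P Q : Fin d → K × K} (hP : ∀ i, (P i).1 ≠ 0) (hQ : ∀ i, (Q i).1 ≠ 0)
    (h : ∀ t, linearFormsProd P t 1 = linearFormsProd Q t 1) :
    ‖linearFormsDisc P‖ = ‖linearFormsDisc Q‖ := by
  have hpoly : Polynomial.C (∏ i, (P i).1) * nodal univ (linearFormsRoots P)
      = Polynomial.C (∏ i, (Q i).1) * nodal univ (linearFormsRoots Q) :=
    Polynomial.funext fun t => by
      rw [eval_C_mul_nodal_linearFormsRoots hP, eval_C_mul_nodal_linearFormsRoots hQ, h]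
  have hlead : ∏ i, (P i).1 = ∏ i, (Q i).1 := by
    simpa only [leadingCoeff_mul, leadingCoeff_C, nodal_monic.leadingCoeff, mul_one] using
      congrArg leadingCoeff hpoly
  rw [hlead] at hpoly
  have hnodal : nodal univ (linearFormsRoots P) = nodal univ (linearFormsRoots Q) :=
    mul_left_cancel₀ (C_ne_zero.2 (prod_ne_zero_iff.2 fun i _ => hQ i)) hpoly
  rw [norm_linearFormsDisc_of_fst_ne_zero hP, norm_linearFormsDisc_of_fst_ne_zero hQ, hlead,
    prod_norm_sub_sq_eq_of_nodal_eq hnodal]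

end Dehomogenization

theorem norm_linearFormsDisc_eq_of_linearFormsProd_eq [NormedField K] [Infinite K] (hd : 2 ≤ d)
    {P Q : Fin d → K × K} (h : ∀ x y, linearFormsProd P x y = linearFormsProd Q x y) :
    ‖linearFormsDisc P‖ = ‖linearFormsDisc Q‖ := by
  by_cases hP : ∀ i, P i ≠ 0
  · have hQ : ∀ i, Q i ≠ 0 := fun i hi => by
      obtain ⟨x, y, hxy⟩ := exists_linearFormsProd_ne_zero hP
      exact hxy (h x y ▸ linearFormsProd_eq_zero hi x y)
    obtain ⟨s, hs⟩ := exists_forall_fst_add_snd_mul_ne_zero (Sum.elim P Q)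
      (by rintro (i | i); exacts [hP i, hQ i])
    -- after the shear `(x, y) ↦ (x, s * x + y)` no linear factor vanishes at `(1, 0)`
    have hshear (L : Fin d → K × K) :
        linearFormsDisc (linearFormsComp L !![1, 0; s, 1]) = linearFormsDisc L := by
      simp [linearFormsDisc_comp]
    rw [← hshear P, ← hshear Q]
    refine norm_linearFormsDisc_eq_of_fst_ne_zero (fun i => ?_) (fun i => ?_) fun t => ?_
    · simpa [linearFormsComp] using hs (.inl i)
    · simpa [linearFormsComp] using hs (.inr i)
    · simp only [linearFormsProd_comp, h]
  · push Not at hP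
    obtain ⟨i, hi⟩ := hP
    obtain ⟨j, hj⟩ : ∃ j, Q j = 0 := by
      by_contra! hQ
      obtain ⟨x, y, hxy⟩ := exists_linearFormsProd_ne_zero hQ
      exact hxy (h x y ▸ linearFormsProd_eq_zero hi x y)
    rw [linearFormsDisc_eq_zero hd hi, linearFormsDisc_eq_zero hd hj]

end LinearForms

theorem aeval_formComp (F : MvPolynomial (Fin 2) ℝ) (T : Matrix (Fin 2) (Fin 2) ℝ) (x y : ℂ) :
    aeval ![x, y] (formComp F T)
      = aeval ![T 0 0 * x + T 0 1 * y, T 1 0 * x + T 1 1 * y] F := by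
  rw [formComp, aeval_bind₁]
  congr 1
  ext i
  fin_cases i <;> simp

theorem stmt_11_general (d : ℕ) (hd : 2 ≤ d) (F : MvPolynomial (Fin 2) ℝ)
    (D : ℝ) (hD : IsBinaryDiscriminantR d F D) :
    |D| ^ (1 / (2 * ((d : ℝ) - 1))) ≤ minHeight d F := by
  obtain ⟨L, hL, hLD⟩ := hD
  have hcomp (T : Matrix (Fin 2) (Fin 2) ℝ) (x y : ℂ) :
      aeval ![x, y] (formComp F T) = linearFormsProd (linearFormsComp L (T.map (↑))) x y := by
    rw [linearFormsProd_comp, aeval_formComp]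
    exact hL _ _
  refine le_csInf ⟨_, 1, by simp, L, fun x y => by simpa [aeval_formComp] using hL x y, rfl⟩ ?_
  rintro _ ⟨T, hT, M, hM, rfl⟩
  have hdisc : |D| = ‖linearFormsDisc M‖ := by
    have hdet : ‖(T.map ((↑) : ℝ → ℂ)).det‖ = 1 := by
      rw [show (T.map ((↑) : ℝ → ℂ)).det = T.det from (Complex.ofRealHom.map_det T).symm,
        Complex.norm_real, Real.norm_eq_abs, hT]
    rw [← norm_linearFormsDisc_eq_of_linearFormsProd_eq hd fun x y =>
        (hcomp T x y).symm.trans (hM x y), linearFormsDisc_comp, norm_mul, norm_pow, hdet,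
      one_pow, one_mul, linearFormsDisc, ← hLD, Complex.norm_real, Real.norm_eq_abs]
  have hexp : 2 * ((d : ℝ) - 1) = ((2 * (d - 1) : ℕ) : ℝ) := by
    push_cast [Nat.cast_sub (by omega : 1 ≤ d)]
    ring
  rw [one_div, hexp, Real.rpow_inv_le_iff_of_pos (abs_nonneg D) (by positivity)
    (Nat.cast_pos.2 (by omega)), Real.rpow_natCast, hdisc]
  exact norm_linearFormsDisc_le M

/-- `𝔪(F) ≥ |D(F)|^{1/(2(d-1))}`. -/
theorem stmt_11 (d : ℕ) (hd : 2 ≤ d) (F : MvPolynomial (Fin 2) ℝ)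
    (hF : F.IsHomogeneous d) (D : ℝ) (hD : IsBinaryDiscriminantR d F D) (hD0 : D ≠ 0) :
    |D| ^ (1 / (2 * ((d : ℝ) - 1))) ≤ minHeight d F :=
  stmt_11_general d hd F D hD
end

section
/- Let d ≥ 3, B > 1, and C₂ > C₁ > B. Suppose y₁ ≤ y₂ ≤ ... ≤ y_{l+1} are positive reals with C₁ ≤ y₁ and y_{l+1} ≤ C₂, satisfying y_{j+1} ≥ y_j^{d-1}/B^{d-2} for all j. Then l < log(log C₂ / log(C₁/B)) / log(d-1). -/
open Real

/-- Counting consequence of the gap principle. -/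
theorem stmt_13 (d : ℕ) (hd : 3 ≤ d) (B C₁ C₂ : ℝ) (hB : 1 < B) (hC₁ : B < C₁)
    (hC₂ : C₁ < C₂) (l : ℕ) (y : ℕ → ℝ)
    (hpos : ∀ j, 1 ≤ j → j ≤ l + 1 → 0 < y j)
    (hmono : ∀ j, 1 ≤ j → j ≤ l + 1 → y j ≤ y (j + 1))
    (hgap : ∀ j, 1 ≤ j → j ≤ l → y j ^ (d - 1) / B ^ (d - 2) ≤ y (j + 1))
    (hlow : C₁ ≤ y 1) (hhigh : y (l + 1) ≤ C₂) :
    (l : ℝ) < Real.log (Real.log C₂ / Real.log (C₁ / B)) / Real.log ((d : ℝ) - 1) := by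
  have hBpos : 0 < B := lt_trans one_pos hB
  have hX : 1 < C₁ / B := (one_lt_div hBpos).2 hC₁
  have hXpos : 0 < C₁ / B := lt_trans one_pos hX
  -- key induction
  have key : ∀ j, 1 ≤ j → j ≤ l + 1 → B * (C₁ / B) ^ ((d - 1) ^ (j - 1)) ≤ y j := by
    intro j hj
    induction j, hj using Nat.le_induction with
    | base =>
      intro _
      have : B * (C₁ / B) ^ ((d - 1) ^ (1 - 1)) = C₁ := by
        simp; field_simp
      rw [this]; exact hlow
    | succ j hj ih =>
      intro hle
      have hjl : j ≤ l := by omega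
      have h1 : B * (C₁ / B) ^ ((d - 1) ^ (j - 1)) ≤ y j := ih (by omega)
      have hypos : 0 < y j := hpos j hj (by omega)
      have h2 : (B * (C₁ / B) ^ ((d - 1) ^ (j - 1))) ^ (d - 1) ≤ y j ^ (d - 1) :=
        pow_le_pow_left₀ (by positivity) h1 _
      have hgapj := hgap j hj hjl
      have hexp : (d - 1) ^ (j - 1) * (d - 1) = (d - 1) ^ j := by
        rw [← pow_succ]
        congr 1
        omega
      have h3 : (B * (C₁ / B) ^ ((d - 1) ^ (j - 1))) ^ (d - 1)
          = B ^ (d - 2) * (B * (C₁ / B) ^ ((d - 1) ^ j)) := by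
        rw [mul_pow, ← pow_mul, hexp, show d - 1 = (d - 2) + 1 by omega, pow_succ]
        ring
      have h4 : B * (C₁ / B) ^ ((d - 1) ^ j)
          ≤ (B * (C₁ / B) ^ ((d - 1) ^ (j - 1))) ^ (d - 1) / B ^ (d - 2) := by
        rw [h3, mul_comm (B ^ (d - 2)), mul_div_assoc,
          div_self (by positivity : (B : ℝ) ^ (d - 2) ≠ 0), mul_one]
      have h5 : (B * (C₁ / B) ^ ((d - 1) ^ (j - 1))) ^ (d - 1) / B ^ (d - 2)
          ≤ y j ^ (d - 1) / B ^ (d - 2) := by gcongr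
      have : B * (C₁ / B) ^ ((d - 1) ^ ((j + 1) - 1)) = B * (C₁ / B) ^ ((d - 1) ^ j) := by
        norm_num
      rw [this]
      exact le_trans h4 (le_trans h5 hgapj)
  have hk := key (l + 1) (by omega) le_rfl
  have hkl : (d - 1) ^ ((l + 1) - 1) = (d - 1) ^ l := by congr 1
  rw [hkl] at hk
  have hpowpos : 0 < (C₁ / B) ^ ((d - 1) ^ l) := pow_pos hXpos _
  have hlt : (C₁ / B) ^ ((d - 1) ^ l) < C₂ := by
    nlinarith [hhigh, hk]
  have hloglt : ((d - 1 : ℕ) ^ l : ℝ) * Real.log (C₁ / B) < Real.log C₂ := by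
    have := Real.log_lt_log hpowpos hlt
    rwa [Real.log_pow, Nat.cast_pow] at this
  have ha : 0 < Real.log (C₁ / B) := Real.log_pos hX
  have hratio : (((d - 1 : ℕ) : ℝ) ^ l) < Real.log C₂ / Real.log (C₁ / B) := by
    rw [lt_div_iff₀ ha]
    push_cast at hloglt ⊢
    exact hloglt
  have hcast : ((d - 1 : ℕ) : ℝ) = (d : ℝ) - 1 := by
    push_cast [Nat.cast_sub (by omega : 1 ≤ d)]
    ring
  rw [hcast] at hratio
  have hd1 : (1 : ℝ) < (d : ℝ) - 1 := by
    have : (3 : ℝ) ≤ (d : ℝ) := by exact_mod_cast hd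
    linarith
  have hppos : 0 < ((d : ℝ) - 1) ^ l := by positivity
  have hfinal : Real.log (((d : ℝ) - 1) ^ l) < Real.log (Real.log C₂ / Real.log (C₁ / B)) :=
    Real.log_lt_log hppos hratio
  rw [Real.log_pow] at hfinal
  have hld : 0 < Real.log ((d : ℝ) - 1) := Real.log_pos hd1
  rw [lt_div_iff₀ hld]
  exact hfinal
end

section
/- The number of subgroups of ℤ² of index m (equivalently, sublattices of ℤ² of determinant m) equals σ(m) = ∑_{n | m} n, the sum of divisors of m. -/
/-!
Every subgroup of `ℤ²` is spanned by the columns `(a, b)`, `(0, d)` of a lower triangular matrix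
(its Hermite normal form): `a ≥ 0` generates the image of the first projection and `d ≥ 0` the
intersection with the second axis. The index of this lattice is `|det| = a * d`, and the lattice
determines `a`, `d` and `b mod d`. Hence the subgroups of index `m` correspond to the pairs
`(d, b)` with `d ∣ m` and `0 ≤ b < d`, and there are `σ(m)` of them.
-/

theorem LinearMap.index_range_eq_natAbs_det {M : Type*} [AddCommGroup M] [Module.Free ℤ M]
    [Module.Finite ℤ M] {f : M →ₗ[ℤ] M} (hf : Function.Injective f) :
    (LinearMap.range f).toAddSubgroup.index = (LinearMap.det f).natAbs :=
  (Submodule.natAbs_det_equiv _ (LinearEquiv.ofInjective f hf)).symm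

theorem AddSubgroup.exists_eq_zmultiples_natCast (H : AddSubgroup ℤ) :
    ∃ n : ℕ, H = AddSubgroup.zmultiples (n : ℤ) := by
  obtain ⟨g, rfl⟩ := Int.subgroup_cyclic H
  exact ⟨g.natAbs, by rw [Int.zmultiples_natAbs, AddSubgroup.zmultiples_eq_closure]⟩

namespace IntLattice

def hermiteMap (a b d : ℤ) : ℤ × ℤ →ₗ[ℤ] ℤ × ℤ :=
  (a • LinearMap.fst ℤ ℤ ℤ).prod (b • LinearMap.fst ℤ ℤ ℤ + d • LinearMap.snd ℤ ℤ ℤ)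

def hermite (a b d : ℤ) : AddSubgroup (ℤ × ℤ) :=
  (LinearMap.range (hermiteMap a b d)).toAddSubgroup

variable {a b d : ℤ}

@[simp]
theorem hermiteMap_apply (s t : ℤ) : hermiteMap a b d (s, t) = (a * s, b * s + d * t) := by
  simp [hermiteMap]

theorem mem_hermite {p : ℤ × ℤ} : p ∈ hermite a b d ↔ ∃ s t : ℤ, (a * s, b * s + d * t) = p := by
  simp [hermite]

theorem det_hermiteMap : LinearMap.det (hermiteMap a b d) = a * d := by
  rw [← LinearMap.det_toMatrix (Module.Basis.finTwoProd ℤ), Matrix.det_fin_two]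
  simp [LinearMap.toMatrix_apply]

theorem hermiteMap_injective (ha : a ≠ 0) (hd : d ≠ 0) : Function.Injective (hermiteMap a b d) := by
  rw [← LinearMap.ker_eq_bot, LinearMap.ker_eq_bot']
  rintro ⟨s, t⟩ h
  obtain ⟨hs, ht⟩ := Prod.mk_eq_zero.mp ((hermiteMap_apply s t).symm.trans h)
  obtain rfl := (mul_eq_zero.mp hs).resolve_left ha
  simpa [hd] using ht

theorem index_hermite (ha : a ≠ 0) (hd : d ≠ 0) : (hermite a b d).index = (a * d).natAbs := by
  rw [hermite, LinearMap.index_range_eq_natAbs_det (hermiteMap_injective ha hd), det_hermiteMap]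

theorem dvd_of_mem_hermite {x y : ℤ} (h : (x, y) ∈ hermite a b d) : a ∣ x := by
  obtain ⟨s, t, hst⟩ := mem_hermite.mp h
  exact ⟨s, (Prod.ext_iff.mp hst).1.symm⟩

theorem zero_mk_mem_hermite_iff (ha : a ≠ 0) {y : ℤ} : (0, y) ∈ hermite a b d ↔ d ∣ y := by
  refine ⟨fun h ↦ ?_, fun ⟨t, ht⟩ ↦ mem_hermite.mpr ⟨0, t, by simp [ht]⟩⟩
  obtain ⟨s, t, hst⟩ := mem_hermite.mp h
  simp only [Prod.mk.injEq, mul_eq_zero, ha, false_or] at hst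
  obtain ⟨rfl, rfl⟩ := hst
  simp

theorem mk_mem_hermite_iff (ha : a ≠ 0) {c : ℤ} : (a, c) ∈ hermite a b d ↔ d ∣ c - b := by
  refine ⟨fun h ↦ ?_, fun ⟨t, ht⟩ ↦ mem_hermite.mpr ⟨1, t, by simp [← ht]⟩⟩
  obtain ⟨s, t, hst⟩ := mem_hermite.mp h
  simp only [Prod.mk.injEq, mul_eq_left₀ ha] at hst
  obtain ⟨rfl, rfl⟩ := hst
  simp

theorem hermite_le_of_modEq {b' : ℤ} (h : b ≡ b' [ZMOD d]) : hermite a b d ≤ hermite a b' d := by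
  obtain ⟨k, hk⟩ := Int.modEq_iff_dvd.mp h
  intro p hp
  obtain ⟨s, t, rfl⟩ := mem_hermite.mp hp
  exact mem_hermite.mpr ⟨s, t - k * s, by ext <;> simp only; linear_combination s * hk⟩

theorem hermite_congr {b' : ℤ} (h : b ≡ b' [ZMOD d]) : hermite a b d = hermite a b' d :=
  le_antisymm (hermite_le_of_modEq h) (hermite_le_of_modEq h.symm)

theorem hermite_inj {a' b' d' : ℤ} (ha : 0 < a) (ha' : 0 < a') (hd : 0 < d) (hd' : 0 < d') :
    hermite a b d = hermite a' b' d' ↔ a = a' ∧ d = d' ∧ b ≡ b' [ZMOD d] := by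
  refine ⟨fun h ↦ ?_, fun ⟨ha, hd, hb⟩ ↦ ha ▸ hd ▸ hermite_congr hb⟩
  have hab : (a, b) ∈ hermite a b d := (mk_mem_hermite_iff ha.ne').mpr (by simp)
  have hab' : (a', b') ∈ hermite a' b' d' := (mk_mem_hermite_iff ha'.ne').mpr (by simp)
  have hd0 : (0, d) ∈ hermite a b d := (zero_mk_mem_hermite_iff ha.ne').mpr dvd_rfl
  have hd0' : (0, d') ∈ hermite a' b' d' := (zero_mk_mem_hermite_iff ha'.ne').mpr dvd_rfl
  rw [h] at hab hd0
  rw [← h] at hab' hd0'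
  have haa' : a = a' := Int.dvd_antisymm ha.le ha'.le (dvd_of_mem_hermite hab')
    (dvd_of_mem_hermite hab)
  subst haa'
  have hdd' : d = d' := Int.dvd_antisymm hd.le hd'.le ((zero_mk_mem_hermite_iff ha.ne').mp hd0')
    ((zero_mk_mem_hermite_iff ha.ne').mp hd0)
  subst hdd'
  exact ⟨rfl, rfl, Int.modEq_iff_dvd.mpr ((mk_mem_hermite_iff ha.ne').mp hab')⟩

theorem exists_eq_hermite (Λ : AddSubgroup (ℤ × ℤ)) :
    ∃ (a d : ℕ) (b : ℤ), Λ = hermite a b d := by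
  obtain ⟨a, hA⟩ := (Λ.map (AddMonoidHom.fst ℤ ℤ)).exists_eq_zmultiples_natCast
  obtain ⟨d, hD⟩ := (Λ.comap (AddMonoidHom.inr ℤ ℤ)).exists_eq_zmultiples_natCast
  have hfst : ∀ q ∈ Λ, (a : ℤ) ∣ q.1 := fun q hq ↦
    Int.mem_zmultiples_iff.mp (hA ▸ AddSubgroup.mem_map_of_mem _ hq)
  have hsnd : ∀ y : ℤ, (0, y) ∈ Λ ↔ (d : ℤ) ∣ y := fun y ↦
    (AddSubgroup.ext_iff.mp hD y).trans Int.mem_zmultiples_iff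
  obtain ⟨p, hp, hpa⟩ : (a : ℤ) ∈ Λ.map (AddMonoidHom.fst ℤ ℤ) :=
    hA ▸ AddSubgroup.mem_zmultiples _
  refine ⟨a, d, p.2, le_antisymm (fun q hq ↦ ?_) (fun q hq ↦ ?_)⟩
  · obtain ⟨s, hs⟩ := hfst q hq
    -- `q - s • p` lies on the second axis
    obtain ⟨t, ht⟩ := (hsnd (q.2 - s * p.2)).mp <| by
      convert Λ.sub_mem hq (Λ.zsmul_mem hp s) using 1
      ext <;> simp [← hpa, hs, mul_comm]
    exact mem_hermite.mpr ⟨s, t, by ext <;> simp [hs, ← ht, mul_comm]⟩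
  · obtain ⟨s, t, rfl⟩ := mem_hermite.mp hq
    convert Λ.add_mem (Λ.zsmul_mem hp s) (Λ.zsmul_mem ((hsnd d).mpr dvd_rfl) t) using 1
    ext <;> simp [← hpa, mul_comm]

theorem ne_zero_of_index_hermite_ne_zero (h : (hermite a b d).index ≠ 0) : a ≠ 0 ∧ d ≠ 0 := by
  have : (hermite a b d).FiniteIndex := ⟨h⟩
  have hx := (hermite a b d).nsmul_index_mem (1, 0)
  have hy := (hermite a b d).nsmul_index_mem (0, 1)
  simp only [Prod.smul_mk, nsmul_eq_mul, mul_one, mul_zero] at hx hy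
  have ha : a ≠ 0 := fun ha ↦ h (by simpa [ha] using dvd_of_mem_hermite hx)
  exact ⟨ha, fun hd ↦ h (by simpa [hd] using (zero_mk_mem_hermite_iff ha).mp hy)⟩

theorem index_hermite_div {m d : ℕ} (hd : d ∈ m.divisors) (b : ℤ) :
    (hermite (m / d : ℕ) b d).index = m := by
  have hd0 : d ≠ 0 := (Nat.pos_of_mem_divisors hd).ne'
  have hmd : m / d ≠ 0 := (Nat.div_pos (Nat.divisor_le hd) (Nat.pos_of_mem_divisors hd)).ne'
  rw [index_hermite (by exact_mod_cast hmd) (by exact_mod_cast hd0), Int.natAbs_mul,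
    Int.natAbs_natCast, Int.natAbs_natCast, Nat.div_mul_cancel (Nat.dvd_of_mem_divisors hd)]

def hermiteOfDivisor (m : ℕ) (x : Σ d : m.divisors, Fin d) :
    {Λ : AddSubgroup (ℤ × ℤ) // Λ.index = m} :=
  ⟨hermite (m / x.1 : ℕ) x.2 x.1, index_hermite_div x.1.2 _⟩

theorem hermiteOfDivisor_injective (m : ℕ) : Function.Injective (hermiteOfDivisor m) := by
  rintro ⟨⟨d, hd⟩, b⟩ ⟨⟨d', hd'⟩, b'⟩ h
  have hpos {d : ℕ} (hd : d ∈ m.divisors) : (0 : ℤ) < (m / d : ℕ) := by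
    exact_mod_cast Nat.div_pos (Nat.divisor_le hd) (Nat.pos_of_mem_divisors hd)
  obtain ⟨-, hdd', hbb'⟩ := (hermite_inj (hpos hd) (hpos hd')
    (by exact_mod_cast Nat.pos_of_mem_divisors hd)
    (by exact_mod_cast Nat.pos_of_mem_divisors hd')).mp (Subtype.ext_iff.mp h)
  dsimp only at hdd' hbb'
  obtain rfl : d = d' := by exact_mod_cast hdd'
  obtain rfl : b = b' := by
    rw [Int.ModEq, Int.emod_eq_of_lt (by positivity) (by exact_mod_cast b.2),
      Int.emod_eq_of_lt (by positivity) (by exact_mod_cast b'.2)] at hbb'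
    exact Fin.ext (by exact_mod_cast hbb')
  rfl

theorem hermiteOfDivisor_surjective {m : ℕ} (hm : 0 < m) :
    Function.Surjective (hermiteOfDivisor m) := by
  rintro ⟨Λ, hΛ⟩
  obtain ⟨a, d, b, rfl⟩ := exists_eq_hermite Λ
  obtain ⟨ha, hd⟩ := ne_zero_of_index_hermite_ne_zero (hΛ ▸ hm.ne')
  have hmad : a * d = m := by
    rwa [index_hermite ha hd, Int.natAbs_mul, Int.natAbs_natCast, Int.natAbs_natCast] at hΛ
  have hdm : d ∈ m.divisors := Nat.mem_divisors.mpr ⟨Dvd.intro_left a hmad, hm.ne'⟩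
  have hd0 : (0 : ℤ) < d := by omega
  have hbd : (b % d).toNat < d := by have := Int.emod_lt_of_pos b hd0; omega
  refine ⟨⟨⟨d, hdm⟩, ⟨(b % d).toNat, hbd⟩⟩, Subtype.ext ?_⟩
  have hdiv : m / d = a := by rw [← hmad, Nat.mul_div_cancel _ (by omega)]
  simp only [hermiteOfDivisor, hdiv, Int.toNat_of_nonneg (Int.emod_nonneg b hd0.ne')]
  exact hermite_congr (Int.mod_modEq b d)

end IntLattice

/-- The number of subgroups of `ℤ²` of index `m` equals the sum of the divisors of `m`. -/
theorem stmt_15 (m : ℕ) (hm : 0 < m) :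
    Nat.card {Λ : AddSubgroup (ℤ × ℤ) // Λ.index = m} = ∑ n ∈ m.divisors, n := by
  rw [← Nat.card_eq_of_bijective _ ⟨IntLattice.hermiteOfDivisor_injective m,
    IntLattice.hermiteOfDivisor_surjective hm⟩, Nat.card_sigma]
  simpa using Finset.sum_attach m.divisors id
end

section
/- Let (x,y) ∈ ℤ² be a primitive point and m a positive integer with m > (π/2)·‖(x,y)‖². Then there is exactly one subgroup Λ ⊆ ℤ² of index m containing (x,y). -/
open Real

/-- A subgroup of `ℤ` of index `m ≠ 0` is `mℤ`. -/
lemma int_subgroup_of_index (H : AddSubgroup ℤ) (m : ℕ) (hm : m ≠ 0)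
    (h : H.index = m) : H = AddSubgroup.zmultiples (m : ℤ) := by
  obtain ⟨a, ha⟩ := Int.subgroup_cyclic H
  have : H = AddSubgroup.zmultiples a := by
    rw [ha]; ext z; simp [AddSubgroup.mem_closure_singleton, AddSubgroup.mem_zmultiples_iff]
  rw [this] at h ⊢
  rw [Int.index_zmultiples] at h
  have : a = m ∨ a = -m := by omega
  rcases this with rfl | rfl
  · rfl
  · ext z
    simp only [AddSubgroup.mem_zmultiples_iff]
    constructor
    · rintro ⟨k, rfl⟩; exact ⟨-k, by rw [zsmul_eq_mul, zsmul_eq_mul]; push_cast; ring⟩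
    · rintro ⟨k, rfl⟩; exact ⟨-k, by rw [zsmul_eq_mul, zsmul_eq_mul]; push_cast; ring⟩

/-- A primitive point `(x,y) ∈ ℤ²` with `m > (π/2)·‖(x,y)‖²` lies in exactly one
subgroup of `ℤ²` of index `m`. -/
theorem stmt_17 (x y : ℤ) (hxy : Int.gcd x y = 1) (m : ℕ)
    (hm : (π / 2) * ((x : ℝ)^2 + (y : ℝ)^2) < (m : ℝ)) :
    ∃! Λ : AddSubgroup (ℤ × ℤ), Λ.index = m ∧ (x, y) ∈ Λ := by
  -- m ≠ 0
  have hm0 : m ≠ 0 := by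
    rintro rfl
    have h1 : (0:ℝ) ≤ (π / 2) * ((x : ℝ)^2 + (y : ℝ)^2) := by positivity
    simp at hm; linarith
  -- Bezout
  obtain ⟨a, b, hab⟩ : ∃ a b : ℤ, a * x + b * y = 1 := by
    refine ⟨x.gcdA y, x.gcdB y, ?_⟩
    have := Int.gcd_eq_gcd_ab x y
    rw [hxy] at this
    push_cast at this
    linarith [this]
  -- the homomorphism with kernel ℤ·(x,y)
  let f : ℤ × ℤ →+ ℤ :=
    { toFun := fun p => x * p.2 - y * p.1
      map_zero' := by simp
      map_add' := by intro p q; simp; ring }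
  have hfxy : f (x, y) = 0 := by simp [f]; ring
  have hfsurj : Function.Surjective f := by
    intro t
    refine ⟨(-(t*b), t*a), ?_⟩
    show x * (t * a) - y * (-(t * b)) = t
    linear_combination t * hab
  have hker : ∀ p : ℤ × ℤ, f p = 0 → ∃ k : ℤ, p = k • (x, y) := by
    rintro ⟨u, v⟩ hp
    simp only [f, AddMonoidHom.coe_mk, ZeroHom.coe_mk, sub_eq_zero] at hp
    refine ⟨a * u + b * v, ?_⟩
    have h1 : (a * u + b * v) * x = u := by linear_combination u * hab + b * hp
    have h2 : (a * u + b * v) * y = v := by linear_combination v * hab - a * hp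
    simp [Prod.ext_iff, smul_eq_mul]
    constructor <;> linarith [h1, h2]
  -- candidate
  refine ⟨AddSubgroup.comap f (AddSubgroup.zmultiples (m : ℤ)), ⟨?_, ?_⟩, ?_⟩
  · rw [AddSubgroup.index_comap_of_surjective _ hfsurj, Int.index_zmultiples,
      Int.natAbs_natCast]
  · simp only [AddSubgroup.mem_comap, hfxy]
    exact zero_mem _
  · rintro Λ ⟨hΛi, hΛmem⟩
    have hkerle : f.ker ≤ Λ := by
      intro p hp
      obtain ⟨k, rfl⟩ := hker p (AddMonoidHom.mem_ker.mp hp)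
      exact AddSubgroup.zsmul_mem Λ hΛmem k
    have hcm : AddSubgroup.comap f (AddSubgroup.map f Λ) = Λ := by
      rw [AddSubgroup.comap_map_eq, sup_of_le_left hkerle]
    have hidx : (AddSubgroup.map f Λ).index = m := by
      rw [AddSubgroup.index_map, sup_of_le_left hkerle,
        AddMonoidHom.range_eq_top.mpr hfsurj, AddSubgroup.index_top, mul_one]
      exact hΛi
    rw [← hcm, int_subgroup_of_index _ m hm0 hidx]
end
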